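/- Let X and Y be topological spaces, with continuous maps μ_X : X × X → X, μ_Y : Y × Y → Y and points e_X ∈ X, e_Y ∈ Y, each satisfying: μ(e,·) ≃ id and μ(·,e) ≃ id; μ∘(μ×id) ≃ μ∘(id×μ); and μ ≃ μ∘swap. Let ρ : X × Y → Y be a continuous map, and suppose there exists a continuous map φ : X → Y admitting a continuous homotopy inverse, such that φ(e_X) lies in the path component of e_Y and ρ ≃ μ_Y∘(φ×id_Y) as continuous maps X × Y → Y. Then for every a ∈ X, the map y ↦ ρ(a,y) is homotopic to the identity of Y if and only if a lies in the path component of e_X. -/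

import Mathlib

/-!
Up to homotopy, the slice `ρ (a, ·)` is left multiplication by `φ a` in `Y`. By the two unit
laws, left multiplication by `y` is homotopic to the identity exactly when `y` is joined to
`e_Y`: evaluate the homotopy at `e_Y`, and conversely move `y` to `e_Y` along a path. Since `φ`
has a left homotopy inverse, it reflects path components, and `φ e_X` is joined to `e_Y`.
-/

namespace ContinuousMap

variable {X Y Z : Type*} [TopologicalSpace X] [TopologicalSpace Y] [TopologicalSpace Z]

theorem Homotopic.joined_apply {f g : C(X, Y)} (h : f.Homotopic g) (x : X) :
    Joined (f x) (g x) :=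
  let ⟨H⟩ := h; ⟨H.evalAt x⟩

theorem Homotopic.curry {f g : C(X × Y, Z)} (h : f.Homotopic g) (a : X) :
    (f.curry a).Homotopic (g.curry a) :=
  h.comp (.refl ((const Y a).prodMk (.id Y)))

theorem homotopic_curry_of_joined (f : C(X × Y, Z)) {a b : X} (h : Joined a b) :
    (f.curry a).Homotopic (f.curry b) :=
  let ⟨p⟩ := h
  ⟨⟨⟨fun q => f (p q.1, q.2), by fun_prop⟩, fun _ => by simp, fun _ => by simp⟩⟩

theorem joined_map_iff_of_homotopic_id {φ : C(X, Y)} {ψ : C(Y, X)}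
    (h : (ψ.comp φ).Homotopic (.id X)) {a b : X} :
    Joined (φ a) (φ b) ↔ Joined a b :=
  ⟨fun hab => ((h.joined_apply a).symm.trans (hab.map ψ.continuous)).trans (h.joined_apply b),
    fun hab => hab.map φ.continuous⟩

theorem curry_homotopic_id_iff_mem_pathComponent (μ : C(Y × Y, Y)) {e : Y}
    (hl : (μ.curry e).Homotopic (.id Y))
    (hr : (μ.comp ((ContinuousMap.id Y).prodMk (const Y e))).Homotopic (.id Y)) (y : Y) :
    (μ.curry y).Homotopic (.id Y) ↔ y ∈ pathComponent e := by
  refine ⟨fun hy => ?_, fun hy => (homotopic_curry_of_joined μ hy.symm).trans hl⟩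
  have hye : Joined (μ (y, e)) e := hy.joined_apply e
  exact hye.symm.trans (hr.joined_apply y)

end ContinuousMap

/-- Let `(X, μ_X, e_X)` and `(Y, μ_Y, e_Y)` be homotopy-unital, homotopy-associative,
homotopy-commutative `H`-spaces and `ρ : X × Y → Y` a continuous map.  Suppose there is
a continuous map `φ : X → Y` with a continuous homotopy inverse `ψ`, such that `φ e_X`
lies in the path component of `e_Y` and `ρ ≃ μ_Y ∘ (φ × id_Y)`.  Then for every `a`,
the map `ρ (a, ·)` is homotopic to `id_Y` iff `a` lies in the path component of `e_X`. -/
theorem action_free_iff {X Y : Type*} [TopologicalSpace X] [TopologicalSpace Y]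
    (eX : X) (μY : C(Y × Y, Y)) (eY : Y)
    (hlY : (μY.comp ((ContinuousMap.const Y eY).prodMk (ContinuousMap.id Y))).Homotopic
      (ContinuousMap.id Y))
    (hrY : (μY.comp ((ContinuousMap.id Y).prodMk (ContinuousMap.const Y eY))).Homotopic
      (ContinuousMap.id Y))
    (ρ : C(X × Y, Y))
    (φ : C(X, Y)) (ψ : C(Y, X))
    (hψφ : (ψ.comp φ).Homotopic (ContinuousMap.id X))
    (he : φ eX ∈ pathComponent eY)
    (hρ : ρ.Homotopic (μY.comp (φ.prodMap (ContinuousMap.id Y)))) :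
    ∀ a : X,
      (ρ.comp ((ContinuousMap.const Y a).prodMk (ContinuousMap.id Y))).Homotopic
        (ContinuousMap.id Y) ↔ a ∈ pathComponent eX := by
  intro a
  have hslice : (ρ.curry a).Homotopic (μY.curry (φ a)) := hρ.curry a
  calc (ρ.curry a).Homotopic (.id Y)
      ↔ (μY.curry (φ a)).Homotopic (.id Y) := ⟨hslice.symm.trans, hslice.trans⟩
    _ ↔ Joined eY (φ a) :=
      ContinuousMap.curry_homotopic_id_iff_mem_pathComponent μY hlY hrY (φ a)
    _ ↔ Joined (φ eX) (φ a) := ⟨he.symm.trans, he.trans⟩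
    _ ↔ Joined eX a := ContinuousMap.joined_map_iff_of_homotopic_id hψφ
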